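/- arXiv:1509.05933 — 2 statements merged into one kernel-verified Lean document; each statement's English description precedes it below -/
import Mathlib

section
/- Let X be a (75,32,10,16) strongly regular graph with a 4-clique K whose outside-degree distribution is (b_0,b_1,b_2,b_3)=(2,23,45,1) with b_4=0. Let x0, x1 be the two vertices with 0 neighbors in K and x3 the unique vertex with 3 neighbors in K. Then x3 is adjacent to both x0 and x1. -/
open Finset

/-- The number of neighbors of `x` inside the vertex set `K`. -/
def nbrs {V : Type*} [DecidableEq V] (G : SimpleGraph V) [DecidableRel G.Adj]
    (K : Finset V) (x : V) : ℕ :=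
  (K.filter (fun y => G.Adj x y)).card

/-- The number of vertices outside `K` with exactly `i` neighbors in `K`. -/
def bcount {V : Type*} [Fintype V] [DecidableEq V] (G : SimpleGraph V) [DecidableRel G.Adj]
    (K : Finset V) (i : ℕ) : ℕ :=
  ((univ \ K).filter (fun x => nbrs G K x = i)).card

/-! Suppose `x3` is not adjacent to `x0`. A vertex `x` with no neighbour in `K` is non-adjacent
to all four clique vertices, so counting paths `x ~ y ~ k ∈ K` gives
`∑_{y ~ x} nbrs y = 4 · 16 = 2 · 32`. Every neighbour of `x` lies outside `K` and has at most `3`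
neighbours in `K`, and only `x3` has `3`. Hence all `32` neighbours of `x0`, and at least `30` of
`x1`, have exactly two neighbours in `K`; since `x0` and `x1` have only `16` common neighbours,
this puts `46` vertices into the class of size `b_2 = 45`. -/

lemma Finset.card_le_card_filter_eq_add {α : Type*} {s : Finset α} {f : α → ℕ} {c : ℕ}
    (hsum : c * #s ≤ ∑ y ∈ s, f y) (hle : ∀ y ∈ s, f y ≤ c + 1) :
    #s ≤ #{y ∈ s | f y = c} + 2 * #{y ∈ s | c < f y} := by
  have hpoint : ∀ y ∈ s, f y + (if f y = c then 0 else 1) ≤ c + (if c < f y then 2 else 0) := by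
    intro y hy
    have := hle y hy
    split_ifs <;> omega
  have hsum' := sum_le_sum hpoint
  rw [sum_add_distrib, sum_add_distrib, sum_ite, sum_ite] at hsum'
  simp only [sum_const_zero, sum_const, smul_eq_mul, mul_one, zero_add, add_zero] at hsum'
  have hpart := card_filter_add_card_filter_not (s := s) (fun y => f y = c)
  rw [mul_comm] at hsum
  omega

namespace SimpleGraph

variable {V : Type*} {G : SimpleGraph V} [DecidableRel G.Adj]

lemma card_commonNeighbors_eq_card_filter [Fintype V] (x w : V) :
    Fintype.card (G.commonNeighbors x w) = #{y ∈ G.neighborFinset x | G.Adj y w} := by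
  rw [← Set.toFinset_card]
  congr 1
  ext y
  rw [Set.mem_toFinset]
  simp [commonNeighbors, adj_comm]

variable [DecidableEq V] {K : Finset V} {x y z : V} {i : ℕ}

lemma nbrs_le_card : nbrs G K x ≤ #K :=
  card_filter_le _ _

lemma notMem_of_adj_of_nbrs_eq_zero (hx : nbrs G K x = 0) (hxy : G.Adj x y) : y ∉ K :=
  fun hy => notMem_empty y (card_eq_zero.mp hx ▸ mem_filter.mpr ⟨hy, hxy⟩)

variable [Fintype V]

lemma nbrs_ne_of_bcount_eq_zero (hb : bcount G K i = 0) (hy : y ∉ K) : nbrs G K y ≠ i :=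
  fun h => notMem_empty y (card_eq_zero.mp hb ▸ by simp [hy, h])

lemma eq_of_bcount_eq_one (hb : bcount G K i = 1) (hyK : y ∉ K) (hy : nbrs G K y = i)
    (hzK : z ∉ K) (hz : nbrs G K z = i) : y = z :=
  card_le_one.mp hb.le y (by simp [hyK, hy]) z (by simp [hzK, hz])

lemma IsSRGWith.sum_nbrs_neighborFinset {n k ℓ μ : ℕ} (hG : G.IsSRGWith n k ℓ μ)
    (hxK : x ∉ K) (hx : nbrs G K x = 0) :
    ∑ y ∈ G.neighborFinset x, nbrs G K y = #K * μ := by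
  calc ∑ y ∈ G.neighborFinset x, nbrs G K y
      = ∑ w ∈ K, #{y ∈ G.neighborFinset x | G.Adj y w} :=
        sum_card_bipartiteAbove_eq_sum_card_bipartiteBelow G.Adj
    _ = ∑ _w ∈ K, μ := sum_congr rfl fun w hw => by
        rw [← card_commonNeighbors_eq_card_filter]
        exact hG.of_not_adj (ne_of_mem_of_not_mem hw hxK).symm
          fun h => notMem_of_adj_of_nbrs_eq_zero hx h hw
    _ = #K * μ := by rw [sum_const, smul_eq_mul]

lemma IsSRGWith.le_card_filter_nbrs_eq {n k ℓ μ c : ℕ} (hG : G.IsSRGWith n k ℓ μ)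
    (hc : #K * μ = c * k) (hxK : x ∉ K) (hx : nbrs G K x = 0)
    (hle : ∀ y ∈ G.neighborFinset x, nbrs G K y ≤ c + 1) :
    k ≤ #{y ∈ G.neighborFinset x | nbrs G K y = c}
      + 2 * #{y ∈ G.neighborFinset x | c < nbrs G K y} := by
  have hdeg : #(G.neighborFinset x) = k := hG.regular x
  rw [← hdeg]
  refine card_le_card_filter_eq_add ?_ hle
  rw [hdeg, hG.sum_nbrs_neighborFinset hxK hx, hc]

lemma adj_of_nbrs_eq_zero (hG : G.IsSRGWith 75 32 10 16) (hK : #K = 4)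
    (hb2 : bcount G K 2 = 45) (hb3 : bcount G K 3 = 1) (hb4 : bcount G K 4 = 0)
    {x0 x1 x3 : V} (hne : x0 ≠ x1)
    (hx0K : x0 ∉ K) (hx0 : nbrs G K x0 = 0) (hx1K : x1 ∉ K) (hx1 : nbrs G K x1 = 0)
    (hx3K : x3 ∉ K) (hx3 : nbrs G K x3 = 3) (hnadj : ¬ G.Adj x0 x1) :
    G.Adj x3 x0 := by
  by_contra hx30
  have hle : ∀ {x}, nbrs G K x = 0 → ∀ y ∈ G.neighborFinset x, nbrs G K y ≤ 2 + 1 := by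
    intro x hx y hy
    have := nbrs_ne_of_bcount_eq_zero hb4
      (notMem_of_adj_of_nbrs_eq_zero hx ((mem_neighborFinset G x y).mp hy))
    have : nbrs G K y ≤ 4 := hK ▸ nbrs_le_card
    omega
  have heq_x3 : ∀ {x y}, nbrs G K x = 0 → y ∈ G.neighborFinset x → 2 < nbrs G K y → y = x3 :=
    fun hx hy h2 => eq_of_bcount_eq_one hb3
      (notMem_of_adj_of_nbrs_eq_zero hx ((mem_neighborFinset G _ _).mp hy))
      (by have := hle hx _ hy; omega) hx3K hx3
  set A := fun x => {y ∈ G.neighborFinset x | nbrs G K y = 2}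
  have hA : ∀ {x}, nbrs G K x = 0 → A x ⊆ {y ∈ univ \ K | nbrs G K y = 2} := by
    intro x hx y hy
    obtain ⟨hy, hy2⟩ := mem_filter.mp hy
    simp [notMem_of_adj_of_nbrs_eq_zero hx ((mem_neighborFinset G x y).mp hy), hy2]
  have hA0 : 32 ≤ #(A x0) := by
    have hhigh : {y ∈ G.neighborFinset x0 | 2 < nbrs G K y} = ∅ :=
      filter_eq_empty_iff.mpr fun y hy h2 =>
        hx30 ((heq_x3 hx0 hy h2) ▸ (mem_neighborFinset G x0 y).mp hy).symm
    simpa [hhigh] using hG.le_card_filter_nbrs_eq (by omega) hx0K hx0 (hle hx0)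
  have hA1 : 30 ≤ #(A x1) := by
    have hhigh : #{y ∈ G.neighborFinset x1 | 2 < nbrs G K y} ≤ 1 :=
      (card_le_card fun y hy => mem_singleton.mpr
        (heq_x3 hx1 (mem_filter.mp hy).1 (mem_filter.mp hy).2)).trans (card_singleton x3).le
    have := hG.le_card_filter_nbrs_eq (by omega) hx1K hx1 (hle hx1)
    simp only [A]
    omega
  have hcommon : #(A x0 ∩ A x1) ≤ 16 := by
    rw [← hG.of_not_adj hne hnadj, card_commonNeighbors_eq_card_filter]
    refine card_le_card fun y hy => ?_
    obtain ⟨hy0, hy1⟩ := mem_inter.mp hy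
    exact mem_filter.mpr ⟨(mem_filter.mp hy0).1,
      ((mem_neighborFinset G x1 y).mp (mem_filter.mp hy1).1).symm⟩
  have hunion : #(A x0 ∪ A x1) ≤ 45 := hb2 ▸ card_le_card (union_subset (hA hx0) (hA hx1))
  have := card_union_add_card_inter (A x0) (A x1)
  omega

end SimpleGraph

theorem stmt7_general {V : Type*} [Fintype V] [DecidableEq V]
    (G : SimpleGraph V) [DecidableRel G.Adj]
    (hG : G.IsSRGWith 75 32 10 16)
    (K : Finset V) (hK : G.IsNClique 4 K)
    (hb2 : bcount G K 2 = 45) (hb3 : bcount G K 3 = 1) (hb4 : bcount G K 4 = 0)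
    (x0 x1 x3 : V) (hne : x0 ≠ x1)
    (hx0K : x0 ∉ K) (hx0 : nbrs G K x0 = 0)
    (hx1K : x1 ∉ K) (hx1 : nbrs G K x1 = 0)
    (hx3K : x3 ∉ K) (hx3 : nbrs G K x3 = 3)
    (hnadj : ¬ G.Adj x0 x1) :
    G.Adj x3 x0 ∧ G.Adj x3 x1 :=
  ⟨G.adj_of_nbrs_eq_zero hG hK.card_eq hb2 hb3 hb4 hne hx0K hx0 hx1K hx1 hx3K hx3 hnadj,
    G.adj_of_nbrs_eq_zero hG hK.card_eq hb2 hb3 hb4 hne.symm hx1K hx1 hx0K hx0 hx3K hx3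
      fun h => hnadj h.symm⟩

/-- Case (2,23,45,1): the unique vertex `x3` with 3 neighbors in the 4-clique `K`
is adjacent to both vertices `x0, x1` having no neighbor in `K` (given that
`x0` and `x1` are not adjacent). -/
theorem stmt7 {V : Type*} [Fintype V] [DecidableEq V]
    (G : SimpleGraph V) [DecidableRel G.Adj]
    (hG : G.IsSRGWith 75 32 10 16)
    (K : Finset V) (hK : G.IsNClique 4 K)
    (hb0 : bcount G K 0 = 2) (hb1 : bcount G K 1 = 23)
    (hb2 : bcount G K 2 = 45) (hb3 : bcount G K 3 = 1) (hb4 : bcount G K 4 = 0)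
    (x0 x1 x3 : V) (hne : x0 ≠ x1)
    (hx0K : x0 ∉ K) (hx0 : nbrs G K x0 = 0)
    (hx1K : x1 ∉ K) (hx1 : nbrs G K x1 = 0)
    (hx3K : x3 ∉ K) (hx3 : nbrs G K x3 = 3)
    (hnadj : ¬ G.Adj x0 x1) :
    G.Adj x3 x0 ∧ G.Adj x3 x1 :=
  stmt7_general G hG K hK hb2 hb3 hb4 x0 x1 x3 hne hx0K hx0 hx1K hx1 hx3K hx3 hnadj
end

section
/- Let X be a (75,32,10,16) strongly regular graph with a 4-clique K whose outside-degree distribution is (3,20,48,0) with b_4=0, and suppose each vertex with 2 neighbors in K is adjacent to exactly two of the three vertices x1,x2,x3 having 0 neighbors in K. Then for each pair i<j, the set N(x_i) ∩ N(x_j) has exactly 16 vertices and the subgraph induced on it is 2-regular (hence a disjoint union of cycles). -/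
/-!
The vertices `x₁, x₂, x₃` are pairwise non-adjacent (their neighbours have two neighbours in `K`,
they have none), so `|N(a) ∩ N(b)| = μ`. For `v ∈ N(a) ∩ N(b)` and `c` the third vertex, every
neighbour of `a`, `b` or `c` sees exactly two of them, so the sets `N(v) ∩ N(a)`, `N(v) ∩ N(b)`,
`N(v) ∩ N(c)` each lie in the union of the other two and have no common element. Counting gives
`λ + λ = 2 |N(v) ∩ N(a) ∩ N(b)| + μ`, i.e. `10 + 10 = 2 · 2 + 16`.
-/

open Finset

namespace Finset

variable {α : Type*} [DecidableEq α]

theorem card_filter_triple_eq_two_iff {a b c : α} (hab : a ≠ b) (hac : a ≠ c) (hbc : b ≠ c)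
    (p : α → Prop) [DecidablePred p] :
    (({a, b, c} : Finset α).filter p).card = 2 ↔
      (p a ∧ p b ∧ ¬p c) ∨ (p a ∧ ¬p b ∧ p c) ∨ (¬p a ∧ p b ∧ p c) := by
  by_cases ha : p a <;> by_cases hb : p b <;> by_cases hc : p c <;>
    simp [filter_insert, filter_singleton, ha, hb, hc, hab, hac, hbc]

theorem exists_eq_insert_insert_singleton_of_card_eq_three {s : Finset α} (hs : #s = 3)
    {a b : α} (ha : a ∈ s) (hb : b ∈ s) (hab : a ≠ b) :
    ∃ c, a ≠ c ∧ b ≠ c ∧ s = {a, b, c} := by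
  have hb' : b ∈ s.erase a := mem_erase.2 ⟨hab.symm, hb⟩
  obtain ⟨c, hc⟩ := card_eq_one.1 (show #((s.erase a).erase b) = 1 by
    rw [card_erase_of_mem hb', card_erase_of_mem ha, hs])
  have hc' : c ∈ (s.erase a).erase b := hc ▸ mem_singleton_self c
  refine ⟨c, (ne_of_mem_erase (mem_of_mem_erase hc')).symm, (ne_of_mem_erase hc').symm, ?_⟩
  rw [← hc, insert_erase hb', insert_erase ha]

theorem card_eq_card_inter_add_card_inter {s t u : Finset α} (h : s ⊆ t ∪ u)
    (hd : Disjoint (s ∩ t) (s ∩ u)) : #s = #(s ∩ t) + #(s ∩ u) := by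
  rw [← card_union_of_disjoint hd, ← inter_union_distrib_left, inter_eq_left.2 h]

theorem card_add_card_eq_two_mul_card_inter_add_card {s t u : Finset α}
    (hs : s ⊆ t ∪ u) (ht : t ⊆ s ∪ u) (hu : u ⊆ s ∪ t) (h : ∀ x ∈ s, x ∈ t → x ∉ u) :
    #s + #t = 2 * #(s ∩ t) + #u := by
  have h₁ := card_eq_card_inter_add_card_inter hs (by
    simp only [disjoint_left, mem_inter]; tauto)
  have h₂ := card_eq_card_inter_add_card_inter ht (by
    simp only [disjoint_left, mem_inter]; tauto)
  have h₃ := card_eq_card_inter_add_card_inter hu (by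
    simp only [disjoint_left, mem_inter]; tauto)
  rw [inter_comm t s] at h₂
  rw [inter_comm u s, inter_comm u t] at h₃
  omega

end Finset

namespace SimpleGraph

variable {V : Type*} [Fintype V] [DecidableEq V] {G : SimpleGraph V} [DecidableRel G.Adj]

theorem card_neighborFinset_inter (v w : V) :
    #(G.neighborFinset v ∩ G.neighborFinset w) = Fintype.card (G.commonNeighbors v w) := by
  rw [← Set.toFinset_card]
  congr 1
  ext x
  rw [Set.mem_toFinset]
  simp [commonNeighbors]

theorem IsSRGWith.two_mul_card_filter_adj_add_eq {n k ℓ μ : ℕ} (hG : G.IsSRGWith n k ℓ μ)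
    {S : Finset V} (hS : #S = 3) (hind : ∀ x ∈ S, ∀ y ∈ S, ¬G.Adj x y)
    (htwo : ∀ x ∈ S, ∀ y, G.Adj x y → #(S.filter (G.Adj y)) = 2)
    {a b : V} (ha : a ∈ S) (hb : b ∈ S) (hab : a ≠ b) {v : V} (hav : G.Adj a v) (hbv : G.Adj b v) :
    2 * #((G.neighborFinset a ∩ G.neighborFinset b).filter (G.Adj v)) + μ = 2 * ℓ := by
  obtain ⟨c, hac, hbc, rfl⟩ := exists_eq_insert_insert_singleton_of_card_eq_three hS ha hb hab
  have hnac : ¬G.Adj a c := hind a ha c (by simp)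
  have hpattern : ∀ y, G.Adj a y ∨ G.Adj b y ∨ G.Adj c y →
      (G.Adj a y ∧ G.Adj b y ∧ ¬G.Adj c y) ∨ (G.Adj a y ∧ ¬G.Adj b y ∧ G.Adj c y) ∨
        (¬G.Adj a y ∧ G.Adj b y ∧ G.Adj c y) := fun y hy => by
    obtain ⟨x, hx, hxy⟩ : ∃ x ∈ ({a, b, c} : Finset V), G.Adj x y := by simpa using hy
    simpa only [card_filter_triple_eq_two_iff hab hac hbc, G.adj_comm y] using htwo x hx y hxy
  have hcv : ¬G.Adj c v := by have := hpattern v (.inl hav); tauto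
  have hvc : v ≠ c := by rintro rfl; exact hnac hav
  set A := G.neighborFinset v ∩ G.neighborFinset a
  set B := G.neighborFinset v ∩ G.neighborFinset b
  set C := G.neighborFinset v ∩ G.neighborFinset c
  have hsplit : #A + #B = 2 * #(A ∩ B) + #C := by
    apply card_add_card_eq_two_mul_card_inter_add_card <;>
    · intro y
      simp only [A, B, C, mem_inter, mem_union, mem_neighborFinset]
      have := hpattern y
      tauto
  have hfilter : (G.neighborFinset a ∩ G.neighborFinset b).filter (G.Adj v) = A ∩ B := by
    ext y
    simp only [A, B, mem_filter, mem_inter, mem_neighborFinset]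
    tauto
  have hA : #A = ℓ := (card_neighborFinset_inter v a).trans (hG.of_adj v a hav.symm)
  have hB : #B = ℓ := (card_neighborFinset_inter v b).trans (hG.of_adj v b hbv.symm)
  have hC : #C = μ := (card_neighborFinset_inter v c).trans (hG.of_not_adj hvc (hcv ·.symm))
  rw [hfilter]
  omega

end SimpleGraph

theorem stmt19_general {V : Type*} [Fintype V] [DecidableEq V]
    (G : SimpleGraph V) [DecidableRel G.Adj]
    (hG : G.IsSRGWith 75 32 10 16)
    (K : Finset V)
    (x1 x2 x3 : V) (h12 : x1 ≠ x2) (h13 : x1 ≠ x3) (h23 : x2 ≠ x3)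
    (hX0 : (univ \ K).filter (fun x => nbrs G K x = 0) = {x1, x2, x3})
    (hN : ∀ i ∈ ({x1, x2, x3} : Finset V),
      G.neighborFinset i ⊆ (univ \ K).filter (fun y => nbrs G K y = 2))
    (htwo : ∀ y ∈ (univ \ K).filter (fun y => nbrs G K y = 2),
      (({x1, x2, x3} : Finset V).filter (fun z => G.Adj y z)).card = 2) :
    ∀ a ∈ ({x1, x2, x3} : Finset V), ∀ b ∈ ({x1, x2, x3} : Finset V), a ≠ b →
      (G.neighborFinset a ∩ G.neighborFinset b).card = 16 ∧
      ∀ v ∈ G.neighborFinset a ∩ G.neighborFinset b,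
        ((G.neighborFinset a ∩ G.neighborFinset b).filter (fun w => G.Adj v w)).card = 2 := by
  intro a ha b hb hab
  have hS : #({x1, x2, x3} : Finset V) = 3 := card_eq_three.2 ⟨x1, x2, x3, h12, h13, h23, rfl⟩
  have hzero : ∀ x ∈ ({x1, x2, x3} : Finset V), nbrs G K x = 0 :=
    fun x hx => (mem_filter.1 (hX0.symm ▸ hx : x ∈ (univ \ K).filter _)).2
  have hind : ∀ x ∈ ({x1, x2, x3} : Finset V), ∀ y ∈ ({x1, x2, x3} : Finset V), ¬G.Adj x y :=
    fun x hx y hy hxy => by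
      have hy2 := (mem_filter.1 (hN x hx ((G.mem_neighborFinset x y).2 hxy))).2
      simp [hzero y hy] at hy2
  have hsee : ∀ x ∈ ({x1, x2, x3} : Finset V), ∀ y, G.Adj x y →
      #(({x1, x2, x3} : Finset V).filter (G.Adj y)) = 2 :=
    fun x hx y hxy => htwo y (hN x hx ((G.mem_neighborFinset x y).2 hxy))
  refine ⟨(SimpleGraph.card_neighborFinset_inter a b).trans
    (hG.of_not_adj hab (hind a ha b hb)), ?_⟩
  intro v hv
  show #((G.neighborFinset a ∩ G.neighborFinset b).filter (G.Adj v)) = 2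
  rw [mem_inter, G.mem_neighborFinset, G.mem_neighborFinset] at hv
  have := hG.two_mul_card_filter_adj_add_eq hS hind hsee ha hb hab hv.1 hv.2
  omega

/-- Case (3,20,48,0,0): given that every 2-neighbor vertex is adjacent to
exactly two of the three 0-neighbor vertices `x1,x2,x3`, for each pair
`a ≠ b` among them the common neighborhood `N(a) ∩ N(b)` has exactly 16
vertices and induces a 2-regular subgraph (a disjoint union of cycles). -/
theorem stmt19 {V : Type*} [Fintype V] [DecidableEq V]
    (G : SimpleGraph V) [DecidableRel G.Adj]
    (hG : G.IsSRGWith 75 32 10 16)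
    (K : Finset V) (hK : G.IsNClique 4 K)
    (hb0 : bcount G K 0 = 3) (hb1 : bcount G K 1 = 20)
    (hb2 : bcount G K 2 = 48) (hb3 : bcount G K 3 = 0) (hb4 : bcount G K 4 = 0)
    (x1 x2 x3 : V) (h12 : x1 ≠ x2) (h13 : x1 ≠ x3) (h23 : x2 ≠ x3)
    (hX0 : (univ \ K).filter (fun x => nbrs G K x = 0) = {x1, x2, x3})
    (hN : ∀ i ∈ ({x1, x2, x3} : Finset V),
      G.neighborFinset i ⊆ (univ \ K).filter (fun y => nbrs G K y = 2))
    (htwo : ∀ y ∈ (univ \ K).filter (fun y => nbrs G K y = 2),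
      (({x1, x2, x3} : Finset V).filter (fun z => G.Adj y z)).card = 2) :
    ∀ a ∈ ({x1, x2, x3} : Finset V), ∀ b ∈ ({x1, x2, x3} : Finset V), a ≠ b →
      (G.neighborFinset a ∩ G.neighborFinset b).card = 16 ∧
      ∀ v ∈ G.neighborFinset a ∩ G.neighborFinset b,
        ((G.neighborFinset a ∩ G.neighborFinset b).filter (fun w => G.Adj v w)).card = 2 :=
  stmt19_general G hG K x1 x2 x3 h12 h13 h23 hX0 hN htwo
end
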